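/- Identify ℝ⁴ with the quaternions ℍ via the basis (1, i, j, k), and for real u, v, w write ũ = (√3/2)u, ṽ = (√3/2)v, w̃ = (√3/2)w. Define p(u,w) = cos(ũ)cos(w̃) + cos(ũ)sin(w̃)·i + sin(ũ)cos(w̃)·j + sin(ũ)sin(w̃)·k and q(u,v) = (1/√2)·[cos(ṽ)(sin(ũ)+cos(ũ)) + sin(ṽ)(sin(ũ)+cos(ũ))·i + cos(ṽ)(sin(ũ)−cos(ũ))·j + sin(ṽ)(sin(ũ)−cos(ũ))·k], and let f : ℝ³ → ℍ×ℍ be f(u,v,w) = (p(u,w), q(u,v)). Then: (i) p(u,w) and q(u,v) are unit quaternions for all u, v, w, so f maps into S³×S³; (ii) the partial derivatives f_u, f_v, f_w of f at (u,v,w) form a g-orthonormal triple at the point f(u,v,w): g(f_u,f_u) = g(f_v,f_v) = g(f_w,f_w) = 1 and g(f_u,f_v) = g(f_u,f_w) = g(f_v,f_w) = 0; (iii) g(f_a, J(f_b)) = 0 for all a, b ∈ {u,v,w}, i.e. f is a flat Lagrangian immersion (a flat Lagrangian torus). Here g and J are evaluated at the point f(u,v,w). -/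

import Mathlib

/-!
With `c = √3/2` one has `p = e^{c w i} e^{c u j}` and `q = e^{c v i} e^{(c u - π/4) j}`.
Left-translating tangent vectors, `Z = (p A, q B) ↦ (A, B)`, turns `g` and `J` into constant
forms on `ℍ × ℍ`, and `g(Z, J Z') = (2/√3) (⟨A, B'⟩ - ⟨A', B⟩)`. The partial derivatives of `f`
translate to `c (j, j)`, `c (0, q⁻¹ i q)` and `c (p⁻¹ i p, 0)`, where
`p⁻¹ i p = i e^{2cu j}` and `q⁻¹ i q = i e^{(2cu - π/2) j}`; hence `j, p⁻¹ i p, q⁻¹ i q` are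
orthonormal, and for any orthonormal triple this frame is orthonormal for the constant metric and
isotropic for the constant 2-form.
-/

open Quaternion

noncomputable section

/-- Euclidean inner product on ℍ ≅ ℝ⁴: ⟨a,b⟩ = Re(a · conj b). -/
def innQ (a b : ℍ[ℝ]) : ℝ := (a * star b).re

/-- Euclidean product inner product on ℍ × ℍ. -/
def innP (Z Z' : ℍ[ℝ] × ℍ[ℝ]) : ℝ := innQ Z.1 Z'.1 + innQ Z.2 Z'.2

/-- Tangency to S³ × S³ at (p,q). -/
def Tangent (p q : ℍ[ℝ]) (Z : ℍ[ℝ] × ℍ[ℝ]) : Prop :=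
  (p⁻¹ * Z.1).re = 0 ∧ (q⁻¹ * Z.2).re = 0

/-- The almost complex structure J of the nearly Kähler S³×S³ at the point (p,q). -/
def Jmap (p q : ℍ[ℝ]) (Z : ℍ[ℝ] × ℍ[ℝ]) : ℍ[ℝ] × ℍ[ℝ] :=
  (Real.sqrt 3)⁻¹ •
    ((2 * (p * q⁻¹ * Z.2) - Z.1, -(2 * (q * p⁻¹ * Z.1)) + Z.2) : ℍ[ℝ] × ℍ[ℝ])

/-- The nearly Kähler metric g at the point (p,q). -/
def gmet (p q : ℍ[ℝ]) (Z Z' : ℍ[ℝ] × ℍ[ℝ]) : ℝ :=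
  (4/3) * (innQ Z.1 Z'.1 + innQ Z.2 Z'.2)
    - (2/3) * (innQ (p⁻¹ * Z.1) (q⁻¹ * Z'.2) + innQ (p⁻¹ * Z'.1) (q⁻¹ * Z.2))

/-- The almost product structure P at the point (p,q). -/
def Pmap (p q : ℍ[ℝ]) (Z : ℍ[ℝ] × ℍ[ℝ]) : ℍ[ℝ] × ℍ[ℝ] :=
  (p * q⁻¹ * Z.2, q * p⁻¹ * Z.1)

/-- The usual product structure Q. -/
def Qmap (Z : ℍ[ℝ] × ℍ[ℝ]) : ℍ[ℝ] × ℍ[ℝ] := (-Z.1, Z.2)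

/-- The quaternion units i, j, k. -/
def qi : ℍ[ℝ] := ⟨0, 1, 0, 0⟩
def qj : ℍ[ℝ] := ⟨0, 0, 1, 0⟩
def qk : ℍ[ℝ] := ⟨0, 0, 0, 1⟩

/-- The first factor of the flat Lagrangian torus. -/
def pTor (u w : ℝ) : ℍ[ℝ] :=
  ⟨Real.cos (Real.sqrt 3 / 2 * u) * Real.cos (Real.sqrt 3 / 2 * w),
   Real.cos (Real.sqrt 3 / 2 * u) * Real.sin (Real.sqrt 3 / 2 * w),
   Real.sin (Real.sqrt 3 / 2 * u) * Real.cos (Real.sqrt 3 / 2 * w),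
   Real.sin (Real.sqrt 3 / 2 * u) * Real.sin (Real.sqrt 3 / 2 * w)⟩

/-- The second factor of the flat Lagrangian torus. -/
def qTor (u v : ℝ) : ℍ[ℝ] :=
  (Real.sqrt 2)⁻¹ •
  (⟨Real.cos (Real.sqrt 3 / 2 * v) *
      (Real.sin (Real.sqrt 3 / 2 * u) + Real.cos (Real.sqrt 3 / 2 * u)),
    Real.sin (Real.sqrt 3 / 2 * v) *
      (Real.sin (Real.sqrt 3 / 2 * u) + Real.cos (Real.sqrt 3 / 2 * u)),
    Real.cos (Real.sqrt 3 / 2 * v) *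
      (Real.sin (Real.sqrt 3 / 2 * u) - Real.cos (Real.sqrt 3 / 2 * u)),
    Real.sin (Real.sqrt 3 / 2 * v) *
      (Real.sin (Real.sqrt 3 / 2 * u) - Real.cos (Real.sqrt 3 / 2 * u))⟩ : ℍ[ℝ])

/-- The flat Lagrangian torus immersion f(u,v,w) = (p(u,w), q(u,v)). -/
def fTor (u v w : ℝ) : ℍ[ℝ] × ℍ[ℝ] := (pTor u w, qTor u v)


open Real
open scoped RealInnerProductSpace

section LeftTrivialized

variable {E : Type*} [NormedAddCommGroup E] [InnerProductSpace ℝ E]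

/- The metric, the almost complex structure and a multiple of the fundamental form `g(·, J ·)` of
the nearly Kähler `S³ × S³`, read through the left trivialization `(p A, q B) ↦ (A, B)`. -/

def gTriv (X Y : E × E) : ℝ :=
  4 / 3 * (⟪X.1, Y.1⟫ + ⟪X.2, Y.2⟫) - 2 / 3 * (⟪X.1, Y.2⟫ + ⟪Y.1, X.2⟫)

def JTriv (Y : E × E) : E × E := (√3)⁻¹ • ((2 : ℝ) • Y.2 - Y.1, Y.2 - (2 : ℝ) • Y.1)

def omegaTriv (X Y : E × E) : ℝ := ⟪X.1, Y.2⟫ - ⟪Y.1, X.2⟫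

theorem gTriv_JTriv (X Y : E × E) : gTriv X (JTriv Y) = 2 / √3 * omegaTriv X Y := by
  simp only [gTriv, JTriv, omegaTriv, Prod.smul_fst, Prod.smul_snd, real_inner_smul_right,
    inner_sub_right, real_inner_comm X.2]
  ring

def lagFrame (e α β : E) : Fin 3 → E × E :=
  ![((√3 / 2) • e, (√3 / 2) • e), (0, (√3 / 2) • β), ((√3 / 2) • α, 0)]

variable {e α β : E}

theorem gTriv_lagFrame (h : Orthonormal ℝ ![e, α, β]) (a b : Fin 3) :
    gTriv (lagFrame e α β a) (lagFrame e α β b) = if a = b then 1 else 0 := by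
  have he : ‖e‖ = 1 := h.1 0
  have hα : ‖α‖ = 1 := h.1 1
  have hβ : ‖β‖ = 1 := h.1 2
  have heα : ⟪e, α⟫ = 0 := h.2 (by decide : (0 : Fin 3) ≠ 1)
  have heβ : ⟪e, β⟫ = 0 := h.2 (by decide : (0 : Fin 3) ≠ 2)
  have hαβ : ⟪α, β⟫ = 0 := h.2 (by decide : (1 : Fin 3) ≠ 2)
  fin_cases a <;> fin_cases b <;>
    norm_num [gTriv, lagFrame, real_inner_smul_left, real_inner_smul_right, norm_smul, he, hα, hβ,
      heα, heβ, hαβ, real_inner_comm e, real_inner_comm α, div_pow]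

theorem omegaTriv_lagFrame (h : Orthonormal ℝ ![e, α, β]) (a b : Fin 3) :
    omegaTriv (lagFrame e α β a) (lagFrame e α β b) = 0 := by
  have heα : ⟪e, α⟫ = 0 := h.2 (by decide : (0 : Fin 3) ≠ 1)
  have heβ : ⟪e, β⟫ = 0 := h.2 (by decide : (0 : Fin 3) ≠ 2)
  have hαβ : ⟪α, β⟫ = 0 := h.2 (by decide : (1 : Fin 3) ≠ 2)
  fin_cases a <;> fin_cases b <;>
    simp [omegaTriv, lagFrame, real_inner_smul_left, real_inner_smul_right, heα, heβ, hαβ,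
      real_inner_comm e]

end LeftTrivialized

theorem innQ_eq_inner (a b : ℍ[ℝ]) : innQ a b = ⟪a, b⟫ := rfl

theorem inner_mul_left_of_norm_eq_one {p : ℍ[ℝ]} (hp : ‖p‖ = 1) (a b : ℍ[ℝ]) :
    ⟪p * a, p * b⟫ = ⟪a, b⟫ :=
  let L : ℍ[ℝ] →ₗᵢ[ℝ] ℍ[ℝ] :=
    { LinearMap.mulLeft ℝ p with norm_map' := fun x => by simp [norm_mul, hp] }
  L.inner_map_map a b

section LeftTranslation

variable {p q : ℍ[ℝ]}

theorem gmet_mul_left (hp : ‖p‖ = 1) (hq : ‖q‖ = 1) (X Y : ℍ[ℝ] × ℍ[ℝ]) :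
    gmet p q ((p, q) * X) ((p, q) * Y) = gTriv X Y := by
  have hp0 : p ≠ 0 := norm_ne_zero_iff.1 (by simp [hp])
  have hq0 : q ≠ 0 := norm_ne_zero_iff.1 (by simp [hq])
  simp only [gmet, gTriv, innQ_eq_inner, Prod.fst_mul, Prod.snd_mul, inv_mul_cancel_left₀ hp0,
    inv_mul_cancel_left₀ hq0, inner_mul_left_of_norm_eq_one hp, inner_mul_left_of_norm_eq_one hq]

theorem Jmap_mul_left (hp : p ≠ 0) (hq : q ≠ 0) (Y : ℍ[ℝ] × ℍ[ℝ]) :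
    Jmap p q ((p, q) * Y) = (p, q) * JTriv Y := by
  simp only [Jmap, JTriv, Prod.fst_mul, Prod.snd_mul, mul_assoc, inv_mul_cancel_left₀ hp,
    inv_mul_cancel_left₀ hq, Prod.smul_mk, Prod.mk_mul_mk, mul_smul_comm, mul_sub, two_mul,
    smul_sub]
  ext1 <;> module

end LeftTranslation

/- `rot x t = exp (t • x)` when `x` is a unit imaginary quaternion. -/
def rot (x : ℍ[ℝ]) (t : ℝ) : ℍ[ℝ] := cos t • 1 + sin t • x

section Rot

variable {x y : ℍ[ℝ]}

theorem rot_zero (x : ℍ[ℝ]) : rot x 0 = 1 := by simp [rot]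

theorem rot_add (hx : x * x = -1) (s t : ℝ) : rot x (s + t) = rot x s * rot x t := by
  simp only [rot, cos_add, sin_add, add_mul, mul_add, smul_mul_smul, one_mul, mul_one, hx]
  module

theorem star_rot (hx : star x = -x) (t : ℝ) : star (rot x t) = rot x (-t) := by
  simp [rot, hx]

theorem norm_eq_one_of_mul_star_eq_one (h : x * star x = 1) : ‖x‖ = 1 := by
  have h' : ((normSq x : ℝ) : ℍ[ℝ]) = 1 := by rw [← self_mul_star, h]
  rw [← pow_eq_one_iff_of_nonneg (norm_nonneg _) two_ne_zero, sq, ← normSq_eq_norm_mul_self]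
  exact coe_injective h'

theorem norm_eq_one_of_mul_self_eq_neg_one (hx : star x = -x) (hxx : x * x = -1) : ‖x‖ = 1 :=
  norm_eq_one_of_mul_star_eq_one (by rw [hx, mul_neg, hxx, neg_neg])

theorem norm_rot (hx : star x = -x) (hxx : x * x = -1) (t : ℝ) : ‖rot x t‖ = 1 :=
  norm_eq_one_of_mul_star_eq_one (by rw [star_rot hx, ← rot_add hxx, add_neg_cancel, rot_zero])

theorem commute_rot (x : ℍ[ℝ]) (t : ℝ) : Commute x (rot x t) := by
  simp only [Commute, SemiconjBy, rot, mul_add, add_mul, mul_smul_comm, smul_mul_assoc, one_mul,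
    mul_one]

theorem mul_rot_of_anticomm (hxy : y * x = -(x * y)) (t : ℝ) : y * rot x t = rot x (-t) * y := by
  simp only [rot, mul_add, add_mul, mul_smul_comm, smul_mul_assoc, one_mul, mul_one, hxy, cos_neg,
    sin_neg]
  module

theorem hasDerivAt_rot (hx : x * x = -1) {f : ℝ → ℝ} {f' t : ℝ} (hf : HasDerivAt f f' t) :
    HasDerivAt (fun s => rot x (f s)) (f' • (rot x (f t) * x)) t := by
  refine ((hf.cos.smul_const (1 : ℍ[ℝ])).add (hf.sin.smul_const x)).congr_deriv ?_
  simp only [rot, add_mul, smul_mul_assoc, one_mul, hx]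
  module

theorem mul_rot_mul_rot (hyy : y * y = -1) (hxy : y * x = -(x * y)) (c a : ℝ) :
    x * (rot x c * rot y a) = rot x c * rot y a * (x * rot y (2 * a)) := by
  have hyx : x * y = -(y * x) := by rw [hxy, neg_neg]
  have hsplit : rot y (-a) = rot y a * rot y (-(2 * a)) := by rw [← rot_add hyy]; ring_nf
  rw [← mul_assoc, (commute_rot x c).eq, mul_assoc, mul_assoc, mul_rot_of_anticomm hyx,
    mul_rot_of_anticomm hyx, hsplit]
  simp only [mul_assoc]

end Rot

@[simp] theorem re_qi : qi.re = 0 := rfl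
@[simp] theorem imI_qi : qi.imI = 1 := rfl
@[simp] theorem imJ_qi : qi.imJ = 0 := rfl
@[simp] theorem imK_qi : qi.imK = 0 := rfl
@[simp] theorem re_qj : qj.re = 0 := rfl
@[simp] theorem imI_qj : qj.imI = 0 := rfl
@[simp] theorem imJ_qj : qj.imJ = 1 := rfl
@[simp] theorem imK_qj : qj.imK = 0 := rfl

theorem qi_mul_qi : qi * qi = -1 := by ext <;> simp
theorem qj_mul_qj : qj * qj = -1 := by ext <;> simp
theorem qj_mul_qi : qj * qi = -(qi * qj) := by ext <;> simp
theorem star_qi : star qi = -qi := by ext <;> simp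
theorem star_qj : star qj = -qj := by ext <;> simp

theorem pTor_eq (u w : ℝ) : pTor u w = rot qi (√3 / 2 * w) * rot qj (√3 / 2 * u) := by
  ext <;> simp [pTor, rot] <;> ring

theorem qTor_eq (u v : ℝ) : qTor u v = rot qi (√3 / 2 * v) * rot qj (√3 / 2 * u - π / 4) := by
  have h2 : (√2)⁻¹ = √2 / 2 := by
    field_simp; rw [sq_sqrt (by norm_num)]
  ext <;> simp [qTor, rot, cos_sub, sin_sub, h2] <;> ring

theorem norm_pTor (u w : ℝ) : ‖pTor u w‖ = 1 := by
  rw [pTor_eq, norm_mul, norm_rot star_qi qi_mul_qi, norm_rot star_qj qj_mul_qj, one_mul]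

theorem norm_qTor (u v : ℝ) : ‖qTor u v‖ = 1 := by
  rw [qTor_eq, norm_mul, norm_rot star_qi qi_mul_qi, norm_rot star_qj qj_mul_qj, one_mul]

/- `p⁻¹ i p` for `p = rot qi c * rot qj θ`, by `mul_rot_mul_rot`. -/
def conjI (θ : ℝ) : ℍ[ℝ] := qi * rot qj (2 * θ)

theorem norm_conjI (θ : ℝ) : ‖conjI θ‖ = 1 := by
  rw [conjI, norm_mul, norm_eq_one_of_mul_self_eq_neg_one star_qi qi_mul_qi,
    norm_rot star_qj qj_mul_qj, one_mul]

theorem inner_qj_conjI (θ : ℝ) : ⟪qj, conjI θ⟫ = 0 := by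
  simp [conjI, rot, inner_def]

theorem inner_conjI_qj (θ : ℝ) : ⟪conjI θ, qj⟫ = 0 := by
  rw [real_inner_comm, inner_qj_conjI]

theorem inner_conjI_conjI (θ θ' : ℝ) : ⟪conjI θ, conjI θ'⟫ = cos (2 * θ - 2 * θ') := by
  simp [conjI, rot, inner_def, cos_sub]

theorem orthonormal_conjI (θ : ℝ) : Orthonormal ℝ ![qj, conjI θ, conjI (θ - π / 4)] := by
  have hπ : cos (2 * θ - 2 * (θ - π / 4)) = 0 := by rw [← cos_pi_div_two]; ring_nf
  have hπ' : cos (2 * (θ - π / 4) - 2 * θ) = 0 := by rw [← cos_neg, ← hπ]; ring_nf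
  refine ⟨fun i => ?_, fun i j hij => ?_⟩
  · fin_cases i <;> simp [norm_conjI, norm_eq_one_of_mul_self_eq_neg_one star_qj qj_mul_qj]
  · fin_cases i <;> fin_cases j <;>
      simp_all [inner_qj_conjI, inner_conjI_qj, inner_conjI_conjI]

theorem hasDerivAt_pTor_left (u w : ℝ) :
    HasDerivAt (fun t => pTor t w) (pTor u w * ((√3 / 2) • qj)) u := by
  simp_rw [pTor_eq]
  refine ((hasDerivAt_rot qj_mul_qj ((hasDerivAt_id' u).const_mul (√3 / 2))).const_mul
    (rot qi (√3 / 2 * w))).congr_deriv ?_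
  simp [mul_assoc]

theorem hasDerivAt_qTor_left (u v : ℝ) :
    HasDerivAt (fun t => qTor t v) (qTor u v * ((√3 / 2) • qj)) u := by
  simp_rw [qTor_eq]
  refine ((hasDerivAt_rot qj_mul_qj
    (((hasDerivAt_id' u).const_mul (√3 / 2)).sub_const (π / 4))).const_mul
    (rot qi (√3 / 2 * v))).congr_deriv ?_
  simp [mul_assoc]

theorem hasDerivAt_pTor_right (u w : ℝ) :
    HasDerivAt (fun t => pTor u t) (pTor u w * ((√3 / 2) • conjI (√3 / 2 * u))) w := by
  simp_rw [pTor_eq]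
  refine ((hasDerivAt_rot qi_mul_qi ((hasDerivAt_id' w).const_mul (√3 / 2))).mul_const
    (rot qj (√3 / 2 * u))).congr_deriv ?_
  rw [conjI, mul_one, smul_mul_assoc, mul_smul_comm, ← mul_rot_mul_rot qj_mul_qj qj_mul_qi,
    ← mul_assoc, (commute_rot qi _).eq]

theorem hasDerivAt_qTor_right (u v : ℝ) :
    HasDerivAt (fun t => qTor u t) (qTor u v * ((√3 / 2) • conjI (√3 / 2 * u - π / 4))) v := by
  simp_rw [qTor_eq]
  refine ((hasDerivAt_rot qi_mul_qi ((hasDerivAt_id' v).const_mul (√3 / 2))).mul_const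
    (rot qj (√3 / 2 * u - π / 4))).congr_deriv ?_
  rw [conjI, mul_one, smul_mul_assoc, mul_smul_comm, ← mul_rot_mul_rot qj_mul_qj qj_mul_qi,
    ← mul_assoc, (commute_rot qi _).eq]

theorem partials_fTor_eq (u v w : ℝ) :
    ![deriv (fun t => fTor t v w) u, deriv (fun t => fTor u t w) v,
        deriv (fun t => fTor u v t) w] =
      fun a => (pTor u w, qTor u v) *
        lagFrame qj (conjI (√3 / 2 * u)) (conjI (√3 / 2 * u - π / 4)) a := by
  funext a
  fin_cases a
  · exact ((hasDerivAt_pTor_left u w).prodMk (hasDerivAt_qTor_left u v)).deriv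
  · simpa [fTor, lagFrame] using
      ((hasDerivAt_const v (pTor u w)).prodMk (hasDerivAt_qTor_right u v)).deriv
  · simpa [fTor, lagFrame] using
      ((hasDerivAt_pTor_right u w).prodMk (hasDerivAt_const w (qTor u v))).deriv

/-- f maps into S³×S³, its partial derivatives form a g-orthonormal
triple, and f is a (flat) Lagrangian immersion. -/
theorem stmt_19 (u v w : ℝ)
    (F : Fin 3 → ℍ[ℝ] × ℍ[ℝ])
    (hF : F = ![deriv (fun t => fTor t v w) u,
                deriv (fun t => fTor u t w) v,
                deriv (fun t => fTor u v t) w]) :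
    (‖pTor u w‖ = 1 ∧ ‖qTor u v‖ = 1) ∧
    (∀ a b : Fin 3,
      gmet (pTor u w) (qTor u v) (F a) (F b) = if a = b then 1 else 0) ∧
    (∀ a b : Fin 3,
      gmet (pTor u w) (qTor u v) (F a) (Jmap (pTor u w) (qTor u v) (F b)) = 0) := by
  have hp := norm_pTor u w
  have hq := norm_qTor u v
  have hframe := orthonormal_conjI (√3 / 2 * u)
  rw [hF, partials_fTor_eq]
  refine ⟨⟨hp, hq⟩, fun a b => ?_, fun a b => ?_⟩
  · rw [gmet_mul_left hp hq, gTriv_lagFrame hframe]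
  · rw [Jmap_mul_left (norm_ne_zero_iff.1 (by simp [hp])) (norm_ne_zero_iff.1 (by simp [hq])),
      gmet_mul_left hp hq, gTriv_JTriv, omegaTriv_lagFrame hframe, mul_zero]
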